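/- Fix b ≥ 0, ρ ∈ (0,1). Then L(m,b,ρ) < L(m+1,b,ρ) for all m ≥ 1: adding a server strictly increases the left-hand side of the service-level inequality, hence weakly enlarges the set of admissible utilizations {ρ : L(m,b,ρ) ≥ 1/(1-α)}. -/
import Mathlib


noncomputable def L (m b : ℕ) (ρ : ℝ) : ℝ :=
  ∑ k ∈ Finset.range m,
    (((m : ℝ) - (k : ℝ)) * (Nat.factorial m : ℝ) * (m : ℝ) ^ b / (Nat.factorial k : ℝ)) *
      ρ ^ (-((m : ℤ) + (b : ℤ) + 1 - (k : ℤ)))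

theorem stmt_19 (b : ℕ) (ρ : ℝ) (hρ : ρ ∈ Set.Ioo (0 : ℝ) 1) :
    ∀ m : ℕ, 1 ≤ m → L m b ρ < L (m + 1) b ρ := by
  obtain ⟨hρ0, hρ1⟩ := hρ
  intro m hm
  have hzpow : ∀ t : ℤ, (0:ℝ) < ρ ^ t := fun t => zpow_pos hρ0 t
  rw [L, L, Finset.sum_range_succ']
  have h1 : ∑ k ∈ Finset.range m,
      (((m : ℝ) - (k : ℝ)) * (Nat.factorial m : ℝ) * (m : ℝ) ^ b / (Nat.factorial k : ℝ)) *
        ρ ^ (-((m : ℤ) + (b : ℤ) + 1 - (k : ℤ)))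
      ≤ ∑ k ∈ Finset.range m,
      ((((m+1 : ℕ) : ℝ) - ((k+1 : ℕ) : ℝ)) * (Nat.factorial (m+1) : ℝ) * ((m+1:ℕ) : ℝ) ^ b /
          (Nat.factorial (k+1) : ℝ)) *
        ρ ^ (-(((m+1:ℕ) : ℤ) + (b : ℤ) + 1 - ((k+1:ℕ) : ℤ))) := by
    apply Finset.sum_le_sum
    intro k hk
    have hk' : k < m := Finset.mem_range.mp hk
    have hexp : (-(((m+1:ℕ) : ℤ) + (b : ℤ) + 1 - ((k+1:ℕ) : ℤ))) = -((m : ℤ) + (b : ℤ) + 1 - (k : ℤ)) := by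
      push_cast; ring
    rw [hexp]
    apply mul_le_mul_of_nonneg_right _ (hzpow _).le
    have hnat : (m - k) * Nat.factorial m * m ^ b * Nat.factorial (k+1)
        ≤ (m - k) * Nat.factorial (m+1) * (m+1) ^ b * Nat.factorial k := by
      rw [Nat.factorial_succ k, Nat.factorial_succ m]
      have h2 : (k+1) * m ^ b ≤ (m+1) * (m+1) ^ b :=
        Nat.mul_le_mul (by omega) (Nat.pow_le_pow_left (by omega) b)
      calc (m - k) * Nat.factorial m * m ^ b * ((k+1) * Nat.factorial k)
          = (m - k) * Nat.factorial m * Nat.factorial k * ((k+1) * m ^ b) := by ring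
        _ ≤ (m - k) * Nat.factorial m * Nat.factorial k * ((m+1) * (m+1) ^ b) :=
            Nat.mul_le_mul_left _ h2
        _ = (m - k) * ((m+1) * Nat.factorial m) * (m+1) ^ b * Nat.factorial k := by ring
    have hmk : ((m : ℝ) - (k : ℝ)) = ((m - k : ℕ) : ℝ) := by
      rw [Nat.cast_sub hk'.le]
    have hmk2 : (((m+1 : ℕ) : ℝ) - ((k+1 : ℕ) : ℝ)) = ((m - k : ℕ) : ℝ) := by
      rw [Nat.cast_sub hk'.le]; push_cast; ring
    rw [hmk, hmk2, div_le_div_iff₀ (by positivity) (by positivity)]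
    have := (Nat.cast_le (α := ℝ)).mpr hnat
    push_cast at this ⊢
    linarith
  have h0 : 0 < ((((m+1:ℕ)) : ℝ) - ((0:ℕ) : ℝ)) * (Nat.factorial (m+1) : ℝ) * ((m+1:ℕ) : ℝ) ^ b /
      (Nat.factorial 0 : ℝ) * ρ ^ (-(((m+1:ℕ) : ℤ) + (b : ℤ) + 1 - ((0:ℕ) : ℤ))) := by
    have : ((((m+1:ℕ)) : ℝ) - ((0:ℕ) : ℝ)) = ((m:ℝ)+1) := by push_cast; ring
    rw [this]
    have := hzpow (-(((m+1:ℕ) : ℤ) + (b : ℤ) + 1 - ((0:ℕ) : ℤ)))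
    positivity
  calc _ ≤ _ := h1
    _ < _ := lt_add_of_pos_right _ h0
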